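/- Let λ be a cardinal and let (κ_δ)_{δ<λ} be cardinals each of which is either equal to 2 or an infinite regular cardinal. Then there exist a pseudo-tree T with a least element and an ultrafilter U on Treealg T such that (U,⊇) ≡_T (∏^w_{δ<λ} κ_δ, ≤). -/

import Mathlib

open Cardinal

/-- A subset `X` of a preorder is cofinal if every element has an upper bound in `X`. -/
def TCofinal {P : Type*} [Preorder P] (X : Set P) : Prop :=
  ∀ p : P, ∃ x ∈ X, p ≤ x

/-- A map is cofinal if it sends cofinal sets to cofinal sets. -/
def TCofinalMap {P Q : Type*} [Preorder P] [Preorder Q] (f : P → Q) : Prop :=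
  ∀ X : Set P, TCofinal X → TCofinal (f '' X)

/-- `P ≤_T Q`: there is a cofinal map from `Q` to `P`. -/
def TukeyLE (P Q : Type*) [Preorder P] [Preorder Q] : Prop :=
  ∃ f : Q → P, TCofinalMap f

/-- Tukey equivalence. -/
def TukeyEquiv (P Q : Type*) [Preorder P] [Preorder Q] : Prop :=
  TukeyLE P Q ∧ TukeyLE Q P

/-- An ultrafilter on a Boolean algebra `B` of subsets of `X` (a field of sets):
a subset of `B` omitting `∅`, closed under intersection, upward closed in `B`, and
containing `s` or `sᶜ` for each `s ∈ B`; regarded as the partial order `(U,⊇)`. -/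
structure SetUltrafilter {X : Type*} (B : Set (Set X)) where
  carrier : Set (Set X)
  subset_alg : carrier ⊆ B
  empty_not_mem : ∅ ∉ carrier
  inter_mem : ∀ a ∈ carrier, ∀ b ∈ carrier, a ∩ b ∈ carrier
  up_closed : ∀ a ∈ carrier, ∀ b ∈ B, a ⊆ b → b ∈ carrier
  mem_or_compl_mem : ∀ b ∈ B, b ∈ carrier ∨ bᶜ ∈ carrier

/-- The Boolean subalgebra of the powerset algebra of `X` generated by a family `G`. -/
def genBoolAlg {X : Type*} (G : Set (Set X)) : Set (Set X) :=
  ⋂₀ {B : Set (Set X) | G ⊆ B ∧ ∅ ∈ B ∧ (∀ s ∈ B, sᶜ ∈ B) ∧ (∀ s ∈ B, ∀ t ∈ B, s ∩ t ∈ B)}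

/-- The (pseudo-)tree algebra of a partial order `T`: the subalgebra of the powerset
algebra of `T` generated by the cones `T↑t = {s : s ≥ t}`. -/
def treealg (T : Type*) [PartialOrder T] : Set (Set T) :=
  genBoolAlg {s : Set T | ∃ t : T, s = Set.Ici t}

/-- The weak product `∏^w_{i ∈ I} κ i`: finitely supported choices of an ordinal
`f i < κ i` in each coordinate, ordered pointwise. -/
def WeakProd {I : Type*} (κ : I → Cardinal) : Type _ :=
  {f : I → Ordinal // (∀ i, f i < (κ i).ord) ∧ {i | f i ≠ 0}.Finite}

noncomputable instance {I : Type*} (κ : I → Cardinal) : PartialOrder (WeakProd κ) :=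
  Subtype.partialOrder _

universe u

/-!
Take for `T` a root `⊥` with, for each `i`, a copy of the reversed ordinal `(κ i).ord` above it,
and for `U` the ultrafilter of all sets containing `⊥`. For `f ∈ ∏^w κ` let `N f` be `T` minus the
cones above the points `f i` with `f i ≠ 0`. These sets form a directed family in `U` that decides
every cone, hence every element of `Treealg T`; so they are cofinal in `(U, ⊇)`. Since
`N g ⊆ N f ↔ f ≤ g`, the map `f ↦ N f` embeds `∏^w κ` as a cofinal suborder of `(U, ⊇)`, and such
an embedding is a Tukey equivalence.
-/

section GenBoolAlg

variable {X : Type*} {G : Set (Set X)}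

theorem subset_genBoolAlg : G ⊆ genBoolAlg G :=
  fun _ hs => Set.mem_sInter.mpr fun _ hB => hB.1 hs

theorem empty_mem_genBoolAlg : ∅ ∈ genBoolAlg G :=
  Set.mem_sInter.mpr fun _ hB => hB.2.1

theorem compl_mem_genBoolAlg {s : Set X} (hs : s ∈ genBoolAlg G) : sᶜ ∈ genBoolAlg G :=
  Set.mem_sInter.mpr fun B hB => hB.2.2.1 s (Set.mem_sInter.mp hs B hB)

theorem inter_mem_genBoolAlg {s t : Set X} (hs : s ∈ genBoolAlg G) (ht : t ∈ genBoolAlg G) :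
    s ∩ t ∈ genBoolAlg G :=
  Set.mem_sInter.mpr fun B hB =>
    hB.2.2.2 s (Set.mem_sInter.mp hs B hB) t (Set.mem_sInter.mp ht B hB)

theorem univ_mem_genBoolAlg : Set.univ ∈ genBoolAlg G := by
  simpa using compl_mem_genBoolAlg (G := G) empty_mem_genBoolAlg

theorem biInter_mem_genBoolAlg {J : Type*} {F : Set J} (hF : F.Finite) {s : J → Set X}
    (hs : ∀ j ∈ F, s j ∈ genBoolAlg G) : ⋂ j ∈ F, s j ∈ genBoolAlg G := by
  induction F, hF using Set.Finite.induction_on with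
  | empty => simpa using univ_mem_genBoolAlg
  | insert _ _ ih =>
    rw [Set.biInter_insert]
    exact inter_mem_genBoolAlg (hs _ (Set.mem_insert _ _))
      (ih fun j hj => hs j (Set.mem_insert_of_mem _ hj))

theorem genBoolAlg_subset {S : Set (Set X)} (hG : G ⊆ S) (hempty : ∅ ∈ S)
    (hcompl : ∀ s ∈ S, sᶜ ∈ S) (hinter : ∀ s ∈ S, ∀ t ∈ S, s ∩ t ∈ S) : genBoolAlg G ⊆ S :=
  fun _ hb => Set.mem_sInter.mp hb S ⟨hG, hempty, hcompl, hinter⟩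

theorem exists_subset_or_subset_compl_of_mem_genBoolAlg {ι : Type*} [Nonempty ι]
    {N : ι → Set X} (hN : Directed (· ⊇ ·) N) (hG : ∀ g ∈ G, ∃ i, N i ⊆ g ∨ N i ⊆ gᶜ)
    {b : Set X} (hb : b ∈ genBoolAlg G) : ∃ i, N i ⊆ b ∨ N i ⊆ bᶜ := by
  refine genBoolAlg_subset (S := {b | ∃ i, N i ⊆ b ∨ N i ⊆ bᶜ}) hG ?_ ?_ ?_ hb
  · obtain ⟨i⟩ := ‹Nonempty ι›
    exact ⟨i, Or.inr (by simp)⟩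
  · rintro s ⟨i, hi⟩
    exact ⟨i, by rwa [compl_compl, or_comm]⟩
  · rintro s ⟨i, hs | hs⟩ t ⟨j, ht | ht⟩
    · obtain ⟨k, hki, hkj⟩ := hN i j
      exact ⟨k, Or.inl (Set.subset_inter (hki.trans hs) (hkj.trans ht))⟩
    all_goals first
      | exact ⟨i, Or.inr (hs.trans (Set.compl_subset_compl.mpr Set.inter_subset_left))⟩
      | exact ⟨j, Or.inr (ht.trans (Set.compl_subset_compl.mpr Set.inter_subset_right))⟩

end GenBoolAlg

def SetUltrafilter.pure {X : Type*} {B : Set (Set X)} (hcompl : ∀ s ∈ B, sᶜ ∈ B)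
    (hinter : ∀ s ∈ B, ∀ t ∈ B, s ∩ t ∈ B) (x : X) : SetUltrafilter B where
  carrier := {b | b ∈ B ∧ x ∈ b}
  subset_alg _ hb := hb.1
  empty_not_mem h := h.2
  inter_mem a ha b hb := ⟨hinter a ha.1 b hb.1, ha.2, hb.2⟩
  up_closed _ ha _ hb hab := ⟨hb, hab ha.2⟩
  mem_or_compl_mem b hb := (em (x ∈ b)).imp (⟨hb, ·⟩) (⟨hcompl b hb, ·⟩)

section Tukey

variable {P Q : Type*} [Preorder P] [Preorder Q]

theorem TukeyLE.of_monotone {g : Q → P} (hg : Monotone g) (hcof : ∀ p, ∃ q, p ≤ g q) :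
    TukeyLE P Q := by
  refine ⟨g, fun X hX p => ?_⟩
  obtain ⟨q, hq⟩ := hcof p
  obtain ⟨x, hxX, hx⟩ := hX q
  exact ⟨g x, Set.mem_image_of_mem g hxX, hq.trans (hg hx)⟩

theorem TukeyLE.of_orderEmbedding (e : P ↪o Q) {h : Q → P} (hh : ∀ q, q ≤ e (h q)) :
    TukeyLE P Q := by
  refine ⟨h, fun X hX p => ?_⟩
  obtain ⟨x, hxX, hx⟩ := hX (e p)
  exact ⟨h x, Set.mem_image_of_mem h hxX, e.le_iff_le.mp (hx.trans (hh x))⟩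

theorem tukeyEquiv_of_orderEmbedding (e : P ↪o Q) (he : ∀ q, ∃ p, q ≤ e p) : TukeyEquiv Q P := by
  refine ⟨.of_monotone e.monotone he, ?_⟩
  choose h hh using he
  exact .of_orderEmbedding e hh

end Tukey

theorem WithBot.isChain_setOf_le_sigma {ι : Type*} {α : ι → Type*} [∀ i, LinearOrder (α i)]
    (t : WithBot (Σ i, α i)) : IsChain (· ≤ ·) {s | s ≤ t} := by
  rintro (_ | x) hx (_ | y) hy -
  · exact Or.inl le_rfl
  · exact Or.inl bot_le
  · exact Or.inr bot_le
  obtain (_ | z) := t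
  · exact absurd hx (WithBot.not_coe_le_bot x)
  obtain ⟨i, a, c, -⟩ := WithBot.coe_le_coe.mp hx
  obtain ⟨_, b, _, -⟩ := WithBot.coe_le_coe.mp hy
  rcases le_total a b with hab | hba
  · exact Or.inl (WithBot.coe_le_coe.mpr (Sigma.mk_le_mk_iff.mpr hab))
  · exact Or.inr (WithBot.coe_le_coe.mpr (Sigma.mk_le_mk_iff.mpr hba))

namespace WeakProd

variable {I : Type*} {κ : I → Cardinal}

instance : IsDirectedOrder (WeakProd κ) where
  directed f g := by
    refine ⟨⟨fun i => max (f.1 i) (g.1 i), fun i => max_lt (f.2.1 i) (g.2.1 i),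
      (f.2.2.union g.2.2).subset fun i hi => ?_⟩,
      fun i => le_max_left _ _, fun i => le_max_right _ _⟩
    by_contra h
    simp_all

open Classical in
noncomputable def single (hκ : ∀ i, κ i ≠ 0) (i : I) (α : Ordinal) (hα : α < (κ i).ord) :
    WeakProd κ :=
  ⟨Pi.single i α, fun j => by
    rcases eq_or_ne j i with rfl | hji
    · simpa using hα
    · simpa [hji, pos_iff_ne_zero] using hκ j,
    (Set.finite_singleton i).subset Pi.support_single_subset⟩

end WeakProd

abbrev BranchTree {I : Type u} (κ : I → Cardinal.{u}) : Type u :=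
  WithBot (Σ i, ((κ i).ord.ToType)ᵒᵈ)

namespace BranchTree

variable {I : Type u} {κ : I → Cardinal.{u}}

noncomputable def pt (i : I) (α : Set.Iio (κ i).ord) : BranchTree κ :=
  ↑(⟨i, OrderDual.toDual (Ordinal.ToType.mk α)⟩ : Σ i, ((κ i).ord.ToType)ᵒᵈ)

theorem eq_bot_or_eq_pt (x : BranchTree κ) : x = ⊥ ∨ ∃ i α, x = pt i α := by
  rcases x with _ | ⟨i, a⟩
  · exact Or.inl rfl
  · exact Or.inr ⟨i, Ordinal.ToType.mk.symm (OrderDual.ofDual a), by simp [pt]; rfl⟩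

theorem pt_ne_bot (i : I) (α : Set.Iio (κ i).ord) : pt i α ≠ ⊥ := WithBot.coe_ne_bot

theorem pt_le_pt_iff {i j : I} {α : Set.Iio (κ i).ord} {β : Set.Iio (κ j).ord} :
    pt j β ≤ pt i α ↔ j = i ∧ (α : Ordinal) ≤ β := by
  rcases eq_or_ne j i with rfl | hji
  · simp [pt]
  · simp only [pt, WithBot.coe_le_coe, hji, false_and, iff_false]
    rintro ⟨⟩
    exact hji rfl

def nbhd (f : WeakProd κ) : Set (BranchTree κ) :=
  ⋂ i ∈ {i | f.1 i ≠ 0}, (Set.Ici (pt i ⟨f.1 i, f.2.1 i⟩))ᶜ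

theorem bot_mem_nbhd (f : WeakProd κ) : ⊥ ∈ nbhd f := by
  simp [nbhd, pt_ne_bot]

theorem pt_mem_nbhd_iff {f : WeakProd κ} {i : I} {α : Set.Iio (κ i).ord} :
    pt i α ∈ nbhd f ↔ (f.1 i ≠ 0 → f.1 i < α) := by
  simp only [nbhd, Set.mem_iInter, Set.mem_compl_iff, Set.mem_Ici, pt_le_pt_iff, not_and, not_le]
  exact ⟨fun h hf => h i hf rfl, by rintro h j hj rfl; exact h hj⟩

theorem nbhd_subset_nbhd_iff {f g : WeakProd κ} : nbhd g ⊆ nbhd f ↔ f ≤ g := by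
  refine ⟨fun h i => ?_, fun hfg x hx => ?_⟩
  · by_contra! hgf
    have hf : f.1 i ≠ 0 := (pos_of_gt hgf).ne'
    have hg : pt i ⟨f.1 i, f.2.1 i⟩ ∈ nbhd g := pt_mem_nbhd_iff.mpr fun _ => hgf
    exact (pt_mem_nbhd_iff.mp (h hg) hf).false
  · rcases eq_bot_or_eq_pt x with rfl | ⟨i, α, rfl⟩
    · exact bot_mem_nbhd f
    · refine pt_mem_nbhd_iff.mpr fun hf => (hfg i).trans_lt (pt_mem_nbhd_iff.mp hx fun hg => ?_)
      exact hf (nonpos_iff_eq_zero.mp ((hfg i).trans_eq hg))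

theorem nbhd_mem_treealg (f : WeakProd κ) : nbhd f ∈ treealg (BranchTree κ) :=
  biInter_mem_genBoolAlg f.2.2 fun _ _ => compl_mem_genBoolAlg (subset_genBoolAlg ⟨_, rfl⟩)

theorem exists_nbhd_subset_or_subset_compl (hκ : ∀ i, 1 < κ i) {b : Set (BranchTree κ)}
    (hb : b ∈ treealg (BranchTree κ)) : ∃ f, nbhd f ⊆ b ∨ nbhd f ⊆ bᶜ := by
  have hκ₀ : ∀ i, κ i ≠ 0 := fun i => (zero_lt_one.trans (hκ i)).ne'
  have : Nonempty (WeakProd κ) := ⟨⟨0, fun i => by simpa [pos_iff_ne_zero] using hκ₀ i, by simp⟩⟩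
  refine exists_subset_or_subset_compl_of_mem_genBoolAlg
    (directed_of_isDirected_le fun _ _ h => nbhd_subset_nbhd_iff.mpr h) ?_ hb
  rintro _ ⟨t, rfl⟩
  rcases eq_bot_or_eq_pt t with rfl | ⟨i, α, rfl⟩
  · exact ⟨Classical.arbitrary _, Or.inl fun _ _ => Set.mem_Ici.mpr bot_le⟩
  have h1 : 1 < (κ i).ord := Cardinal.lt_ord.mpr (by simpa using hκ i)
  -- `max α 1` rather than `α`: the coordinate `0` imposes no condition, yet the cone above
  -- `pt i 0` must be cut off.
  refine ⟨.single hκ₀ i (max α 1) (max_lt α.2 h1), Or.inr fun x hx hαx => ?_⟩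
  rcases eq_bot_or_eq_pt x with rfl | ⟨j, β, rfl⟩
  · exact WithBot.not_coe_le_bot _ hαx
  obtain ⟨rfl, hβα⟩ := pt_le_pt_iff.mp hαx
  have := pt_mem_nbhd_iff.mp hx (by simp [WeakProd.single])
  simp only [WeakProd.single, Pi.single_eq_same] at this
  exact (hβα.trans (le_max_left _ _)).not_gt this

theorem exists_nbhd_subset (hκ : ∀ i, 1 < κ i) {b : Set (BranchTree κ)}
    (hb : b ∈ treealg (BranchTree κ)) (hbot : ⊥ ∈ b) : ∃ f, nbhd f ⊆ b := by
  obtain ⟨f, hf | hf⟩ := exists_nbhd_subset_or_subset_compl hκ hb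
  · exact ⟨f, hf⟩
  · exact absurd hbot (hf (bot_mem_nbhd f))

variable (κ) in
noncomputable def rootUltrafilter : SetUltrafilter (treealg (BranchTree κ)) :=
  .pure (fun _ => compl_mem_genBoolAlg) (fun _ hs _ ht => inter_mem_genBoolAlg hs ht) ⊥

noncomputable def nbhdEmbedding : WeakProd κ ↪o (↥(rootUltrafilter κ).carrier)ᵒᵈ :=
  OrderEmbedding.ofMapLEIff
    (fun f => OrderDual.toDual ⟨nbhd f, nbhd_mem_treealg f, bot_mem_nbhd f⟩)
    fun _ _ => nbhd_subset_nbhd_iff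

theorem tukeyEquiv_rootUltrafilter (hκ : ∀ i, 1 < κ i) :
    TukeyEquiv (↥(rootUltrafilter κ).carrier)ᵒᵈ (WeakProd κ) :=
  tukeyEquiv_of_orderEmbedding nbhdEmbedding fun b =>
    exists_nbhd_subset hκ (OrderDual.ofDual b).2.1 (OrderDual.ofDual b).2.2

end BranchTree

/-- For any cardinal `λ` and cardinals `κ_δ (δ < λ)`, each equal to `2` or
an infinite regular cardinal, there is a pseudo-tree `T` with a least element and an
ultrafilter `U` on `Treealg T` with `(U,⊇) ≡_T (∏^w_{δ<λ} κ_δ, ≤)`. -/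
theorem stmt15 (lam : Cardinal.{u}) (κ : lam.ord.ToType → Cardinal.{u})
    (hκ : ∀ δ, κ δ = 2 ∨ (ℵ₀ ≤ κ δ ∧ (κ δ).IsRegular)) :
    ∃ (T : Type u) (inst : PartialOrder T),
      letI := inst
      (∀ t : T, IsChain (· ≤ ·) {s : T | s ≤ t}) ∧
        (∃ bot : T, ∀ t : T, bot ≤ t) ∧
        ∃ U : SetUltrafilter (treealg T),
          TukeyEquiv ((↥U.carrier)ᵒᵈ) (WeakProd κ) := by
  have hκ₁ : ∀ δ, 1 < κ δ := fun δ => by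
    rcases hκ δ with h | ⟨h, -⟩
    · exact h ▸ one_lt_two
    · exact one_lt_aleph0.trans_le h
  exact ⟨BranchTree κ, inferInstance, WithBot.isChain_setOf_le_sigma, ⟨⊥, fun _ => bot_le⟩,
    BranchTree.rootUltrafilter κ, BranchTree.tukeyEquiv_rootUltrafilter hκ₁⟩
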